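/- Transitivity of data equality in G: for every nominal i, all path expressions α,β, and every c ∈ Cmp, the sequent ⊢ @_i(⟨α =_c ε⟩ ∧ ⟨ε =_c β⟩ → ⟨α =_c β⟩) (with empty antecedent) is provable in G. -/

import Mathlib

namespace HXPathD

mutual
  inductive Path (P N M C : Type) : Type where
    | mod  : M → Path P N M C
    | nom  : N → Path P N M C
    | test : Node P N M C → Path P N M C
    | comp : Path P N M C → Path P N M C → Path P N M C

  inductive Node (P N M C : Type) : Type where
    | prop : P → Node P N M C
    | nom  : N → Node P N M C
    | bot  : Node P N M C
    | impl : Node P N M C → Node P N M C → Node P N M C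
    | at   : N → Node P N M C → Node P N M C
    | dia  : M → Node P N M C → Node P N M C
    | eq   : Path P N M C → C → Path P N M C → Node P N M C
    | neq  : Path P N M C → C → Path P N M C → Node P N M C
end

variable {P N M C : Type}

/-- Abbreviations. -/
def Node.neg (φ : Node P N M C) : Node P N M C := .impl φ .bot
def Node.top : Node P N M C := .impl .bot .bot
def Node.and (φ ψ : Node P N M C) : Node P N M C := .neg (.impl φ (.neg ψ))
def Node.iff (φ ψ : Node P N M C) : Node P N M C := .and (.impl φ ψ) (.impl ψ φ)
def Node.box (a : M) (φ : Node P N M C) : Node P N M C := .neg (.dia a (.neg φ))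
def Path.eps : Path P N M C := .test .top

/-- The node expression ⟨α⟩φ, obtained by the abbreviations
    ⟨j:⟩φ := @_jφ, ⟨ψ?⟩φ := ψ∧φ, ⟨αβ⟩φ := ⟨α⟩⟨β⟩φ (with ⟨a⟩φ primitive). -/
def Path.dia : Path P N M C → Node P N M C → Node P N M C
  | .mod a, φ => .dia a φ
  | .nom j, φ => .at j φ
  | .test ψ, φ => .and ψ φ
  | .comp α β, φ => α.dia (β.dia φ)

/-- A comparison ▲ ∈ {=_c, ≠_c : c ∈ Cmp}. -/
inductive Comparison (C : Type) : Type where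
  | ceq  : C → Comparison C
  | cneq : C → Comparison C

/-- The node expression ⟨α ▲ β⟩. -/
def Comparison.node : Comparison C → Path P N M C → Path P N M C → Node P N M C
  | .ceq c, α, β => .eq α c β
  | .cneq c, α, β => .neq α c β

/-- A hybrid data model. -/
structure Model (P N M C : Type) where
  W : Type
  nonempty : Nonempty W
  R : M → W → W → Prop
  E : C → W → W → Prop
  E_equiv : ∀ c, Equivalence (E c)
  g : N → W
  V : P → W → Prop

mutual
  def Model.satPath (𝔐 : Model P N M C) : Path P N M C → 𝔐.W → 𝔐.W → Prop
    | .mod a, n, n' => 𝔐.R a n n'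
    | .nom i, _, n' => 𝔐.g i = n'
    | .test φ, n, n' => n = n' ∧ 𝔐.sat φ n
    | .comp α β, n, n' => ∃ n'', 𝔐.satPath α n n'' ∧ 𝔐.satPath β n'' n'

  def Model.sat (𝔐 : Model P N M C) : Node P N M C → 𝔐.W → Prop
    | .prop p, n => 𝔐.V p n
    | .nom i, n => 𝔐.g i = n
    | .bot, _ => False
    | .impl φ ψ, n => 𝔐.sat φ n → 𝔐.sat ψ n
    | .at i φ, _ => 𝔐.sat φ (𝔐.g i)
    | .dia a φ, n => ∃ n', 𝔐.R a n n' ∧ 𝔐.sat φ n'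
    | .eq α c β, n => ∃ n' n'', 𝔐.satPath α n n' ∧ 𝔐.satPath β n n'' ∧ 𝔐.E c n' n''
    | .neq α c β, n => ∃ n' n'', 𝔐.satPath α n n' ∧ 𝔐.satPath β n n'' ∧ ¬ 𝔐.E c n' n''
end

mutual
  def Path.noms : Path P N M C → Set N
    | .mod _ => ∅
    | .nom i => {i}
    | .test φ => φ.noms
    | .comp α β => α.noms ∪ β.noms

  def Node.noms : Node P N M C → Set N
    | .prop _ => ∅
    | .nom i => {i}
    | .bot => ∅
    | .impl φ ψ => φ.noms ∪ ψ.noms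
    | .at i φ => insert i φ.noms
    | .dia _ φ => φ.noms
    | .eq α _ β => α.noms ∪ β.noms
    | .neq α _ β => α.noms ∪ β.noms
end

/-- Node expressions of the admissible forms for sequents:
    ⟨i: ▲ j:⟩ or @_iφ. -/
def Node.Admissible : Node P N M C → Prop
  | .at _ _ => True
  | .eq (.nom _) _ (.nom _) => True
  | .neq (.nom _) _ (.nom _) => True
  | _ => False

/-- A sequent: antecedent and consequent. -/
abbrev Sequent (P N M C : Type) := Set (Node P N M C) × Set (Node P N M C)

/-- The nominal `j` does not occur in the set `S`. -/
def FreshIn (j : N) (S : Set (Node P N M C)) : Prop := ∀ φ ∈ S, j ∉ φ.noms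

/-- Shape restriction on the axiom (Ax). -/
inductive AxForm : Node P N M C → Prop where
  | prop (i : N) (p : P) : AxForm (.at i (.prop p))
  | nom (i j : N) : AxForm (.at i (.nom j))
  | eq (i : N) (c : C) (j : N) : AxForm (.eq (.nom i) c (.nom j))

/-- Shape restriction on the rule (S1): φ is p, ⊥ or ⟨a⟩k. -/
inductive S1Form : Node P N M C → Prop where
  | prop (p : P) : S1Form (.prop p)
  | bot : S1Form .bot
  | dia (a : M) (k : N) : S1Form (.dia a (.nom k))

/-- One rule instance of the sequent calculus G: `Step cut prems concl` holds iff
    `concl` may be inferred from the premisses `prems` by a rule of G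
    (when `cut = false`, the rule (Cut) is excluded). -/
inductive Step (cut : Bool) : List (Sequent P N M C) → Sequent P N M C → Prop where
  | ax {Γ Δ : Set (Node P N M C)} {φ} (h : AxForm φ) :
      Step cut [] (insert φ Γ, insert φ Δ)
  | bot {Γ Δ : Set (Node P N M C)} (i : N) :
      Step cut [] (insert (.at i .bot) Γ, Δ)
  | implL {Γ Δ : Set (Node P N M C)} (i : N) (φ ψ : Node P N M C) :
      Step cut [(Γ, insert (.at i φ) Δ), (insert (.at i ψ) Γ, Δ)]
        (insert (.at i (.impl φ ψ)) Γ, Δ)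
  | implR {Γ Δ : Set (Node P N M C)} (i : N) (φ ψ : Node P N M C) :
      Step cut [(insert (.at i φ) Γ, insert (.at i ψ) Δ)]
        (Γ, insert (.at i (.impl φ ψ)) Δ)
  | atT {Γ Δ : Set (Node P N M C)} (i : N) :
      Step cut [(insert (.at i (.nom i)) Γ, Δ)] (Γ, Δ)
  | at5 {Γ Δ : Set (Node P N M C)} (i j k : N) :
      Step cut
        [(insert (.at j (.nom k)) (insert (.at i (.nom j)) (insert (.at i (.nom k)) Γ)), Δ)]
        (insert (.at i (.nom j)) (insert (.at i (.nom k)) Γ), Δ)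
  | nomRule {Γ Δ : Set (Node P N M C)} (i j : N)
      (hj : FreshIn j Γ) (hj' : FreshIn j Δ) :
      Step cut [(insert (.at i (.nom j)) Γ, Δ)] (Γ, Δ)
  | s1 {Γ Δ : Set (Node P N M C)} (i j : N) {φ : Node P N M C} (h : S1Form φ) :
      Step cut
        [(insert (.at j φ) (insert (.at i (.nom j)) (insert (.at i φ) Γ)), Δ)]
        (insert (.at i (.nom j)) (insert (.at i φ) Γ), Δ)
  | s2 {Γ Δ : Set (Node P N M C)} (i j k : N) (a : M) :
      Step cut
        [(insert (.at i (.dia a (.nom k)))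
            (insert (.at j (.nom k)) (insert (.at i (.dia a (.nom j))) Γ)), Δ)]
        (insert (.at j (.nom k)) (insert (.at i (.dia a (.nom j))) Γ), Δ)
  | s3 {Γ Δ : Set (Node P N M C)} (i j k : N) (c : C) :
      Step cut
        [(insert (.eq (.nom j) c (.nom k))
            (insert (.at i (.nom j)) (insert (.eq (.nom i) c (.nom k)) Γ)), Δ)]
        (insert (.at i (.nom j)) (insert (.eq (.nom i) c (.nom k)) Γ), Δ)
  | atL {Γ Δ : Set (Node P N M C)} (i j : N) (φ : Node P N M C) :
      Step cut [(insert (.at i φ) Γ, Δ)] (insert (.at j (.at i φ)) Γ, Δ)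
  | atR {Γ Δ : Set (Node P N M C)} (i j : N) (φ : Node P N M C) :
      Step cut [(Γ, insert (.at i φ) Δ)] (Γ, insert (.at j (.at i φ)) Δ)
  | diaL {Γ Δ : Set (Node P N M C)} (i j : N) (a : M) (φ : Node P N M C)
      (hj : FreshIn j (insert (.at i (.dia a φ)) Γ)) (hj' : FreshIn j Δ) :
      Step cut
        [(insert (.at i (.dia a (.nom j))) (insert (.at j φ) Γ), Δ)]
        (insert (.at i (.dia a φ)) Γ, Δ)
  | diaR {Γ Δ : Set (Node P N M C)} (i j : N) (a : M) (φ : Node P N M C) :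
      Step cut
        [(insert (.at i (.dia a (.nom j))) Γ,
          insert (.at i (.dia a φ)) (insert (.at j φ) Δ))]
        (insert (.at i (.dia a (.nom j))) Γ, insert (.at i (.dia a φ)) Δ)
  | cmpL {Γ Δ : Set (Node P N M C)} (i j k : N) (α β : Path P N M C)
      (b : Comparison C) (hjk : j ≠ k)
      (hj : FreshIn j (insert (.at i (b.node α β)) Γ)) (hj' : FreshIn j Δ)
      (hk : FreshIn k (insert (.at i (b.node α β)) Γ)) (hk' : FreshIn k Δ) :
      Step cut
        [(insert (.at i (α.dia (.nom j)))
            (insert (.at i (β.dia (.nom k)))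
              (insert (b.node (.nom j) (.nom k)) Γ)), Δ)]
        (insert (.at i (b.node α β)) Γ, Δ)
  | cmpR {Γ Δ : Set (Node P N M C)} (i j k : N) (α β : Path P N M C)
      (b : Comparison C) :
      Step cut
        [(insert (.at i (α.dia (.nom j))) (insert (.at i (β.dia (.nom k))) Γ),
          insert (.at i (b.node α β)) (insert (b.node (.nom j) (.nom k)) Δ))]
        (insert (.at i (α.dia (.nom j))) (insert (.at i (β.dia (.nom k))) Γ),
          insert (.at i (b.node α β)) Δ)
  | eqT {Γ Δ : Set (Node P N M C)} (i : N) (c : C) :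
      Step cut [(insert (.eq (.nom i) c (.nom i)) Γ, Δ)] (Γ, Δ)
  | eq5 {Γ Δ : Set (Node P N M C)} (i j k : N) (c : C) :
      Step cut
        [(insert (.eq (.nom j) c (.nom k))
            (insert (.eq (.nom i) c (.nom j)) (insert (.eq (.nom i) c (.nom k)) Γ)), Δ)]
        (insert (.eq (.nom i) c (.nom j)) (insert (.eq (.nom i) c (.nom k)) Γ), Δ)
  | neqL {Γ Δ : Set (Node P N M C)} (i j : N) (c : C) :
      Step cut [(Γ, insert (.eq (.nom i) c (.nom j)) Δ)]
        (insert (.neq (.nom i) c (.nom j)) Γ, Δ)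
  | neqR {Γ Δ : Set (Node P N M C)} (i j : N) (c : C) :
      Step cut [(insert (.eq (.nom i) c (.nom j)) Γ, Δ)]
        (Γ, insert (.neq (.nom i) c (.nom j)) Δ)
  | cutRule {Γ Δ Γ' Δ' : Set (Node P N M C)} (φ : Node P N M C)
      (ha : φ.Admissible) (hc : cut = true) :
      Step cut [(Γ, insert φ Δ), (insert φ Γ', Δ')] (Γ ∪ Γ', Δ ∪ Δ')
  | wl {Γ Δ : Set (Node P N M C)} (φ : Node P N M C) (ha : φ.Admissible) :
      Step cut [(Γ, Δ)] (insert φ Γ, Δ)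
  | wr {Γ Δ : Set (Node P N M C)} (φ : Node P N M C) (ha : φ.Admissible) :
      Step cut [(Γ, Δ)] (Γ, insert φ Δ)

/-- Derivability in G (`Deriv true`) resp. in G without (Cut) (`Deriv false`):
    a derivation built from the rules whose leaves are instances of the
    zero-premiss rules (Ax) or (⊥). -/
inductive Deriv (cut : Bool) : Sequent P N M C → Prop where
  | step {prems : List (Sequent P N M C)} {concl : Sequent P N M C}
      (h : Step cut prems concl) (ih : ∀ s ∈ prems, Deriv cut s) : Deriv cut concl

/-- Γ ⊢_G Δ : the sequent is provable in G. -/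
def ProvableG (Γ Δ : Set (Node P N M C)) : Prop := Deriv true (Γ, Δ)

/-- M ⊩ φ : global satisfaction. -/
def Model.satG (𝔐 : Model P N M C) (φ : Node P N M C) : Prop := ∀ n, 𝔐.sat φ n

/-- Validity of a sequent. -/
def ValidSeq (S : Sequent P N M C) : Prop :=
  ∀ 𝔐 : Model P N M C, (∀ γ ∈ S.1, 𝔐.satG γ) → ∃ δ ∈ S.2, 𝔐.satG δ

/-- Formulas of the basic hybrid logic H(@): no data comparisons. -/
def Node.IsHybrid : Node P N M C → Prop
  | .prop _ => True
  | .nom _ => True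
  | .bot => True
  | .impl φ ψ => φ.IsHybrid ∧ ψ.IsHybrid
  | .at _ φ => φ.IsHybrid
  | .dia _ φ => φ.IsHybrid
  | .eq _ _ _ => False
  | .neq _ _ _ => False

/-!
Unfolding `∧` and `→`, the sequent reduces to `@ᵢ⟨α =_c ε⟩, @ᵢ⟨ε =_c β⟩ ⊢ @ᵢ⟨α =_c β⟩`.
Rule (⟨▲⟩L) names the endpoints of both comparisons: `@ᵢ⟨α⟩j, @ᵢ⟨ε⟩k, ⟨j: =_c k:⟩` and
`@ᵢ⟨ε⟩j', @ᵢ⟨β⟩k', ⟨j': =_c k':⟩`. The ε-endpoints are `i` itself (`@ᵢ⟨ε⟩k` unfolds to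
`@ᵢ(⊤ ∧ k)`), so (EqT), (S3) and (Eq5) chain `j =_c k =_c i =_c j' =_c k'`, and (⟨▲⟩R) with the
witnesses `j, k'` reduces the goal to the axiom `⟨j: =_c k':⟩ ⊢ ⟨j: =_c k':⟩`.
-/

mutual
  theorem Path.noms_finite : ∀ α : Path P N M C, α.noms.Finite
    | .mod _ => Set.finite_empty
    | .nom _ => Set.finite_singleton _
    | .test φ => φ.noms_finite
    | .comp α β => α.noms_finite.union β.noms_finite

  theorem Node.noms_finite : ∀ φ : Node P N M C, φ.noms.Finite
    | .prop _ => Set.finite_empty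
    | .nom _ => Set.finite_singleton _
    | .bot => Set.finite_empty
    | .impl φ ψ => φ.noms_finite.union ψ.noms_finite
    | .at _ φ => φ.noms_finite.insert _
    | .dia _ φ => φ.noms_finite
    | .eq α _ β => α.noms_finite.union β.noms_finite
    | .neq α _ β => α.noms_finite.union β.noms_finite
end

lemma freshIn_union {j : N} {S T : Set (Node P N M C)} :
    FreshIn j (S ∪ T) ↔ FreshIn j S ∧ FreshIn j T := by
  simp only [FreshIn, Set.mem_union, or_imp, forall_and]

lemma exists_freshIn [Infinite N] {S : Set (Node P N M C)} (hS : S.Finite) {T : Set N}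
    (hT : T.Finite) : ∃ j ∉ T, FreshIn j S := by
  obtain ⟨j, hj⟩ :=
    ((hS.biUnion fun φ _ => φ.noms_finite).union hT).infinite_compl.nonempty
  simp only [Set.mem_compl_iff, Set.mem_union, Set.mem_iUnion, not_or, not_exists] at hj
  exact ⟨j, hj.2, hj.1⟩

@[simp]
lemma Path.eps_dia (φ : Node P N M C) : Path.eps.dia φ = Node.top.and φ := rfl

@[simp]
lemma Comparison.node_ceq (c : C) (α β : Path P N M C) :
    (Comparison.ceq c).node α β = .eq α c β := rfl

namespace Deriv

variable {cut : Bool} {Γ Δ : Set (Node P N M C)}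

lemma of_step₁ {s t : Sequent P N M C} (h : Step cut [t] s) (d : Deriv cut t) :
    Deriv cut s :=
  .step h (by simpa using d)

lemma of_step₂ {s t u : Sequent P N M C} (h : Step cut [t, u] s) (dt : Deriv cut t)
    (du : Deriv cut u) : Deriv cut s :=
  .step h (by simp [dt, du])

lemma ax_of_mem {φ : Node P N M C} (hφ : AxForm φ) (hΓ : φ ∈ Γ) (hΔ : φ ∈ Δ) :
    Deriv cut (Γ, Δ) := by
  simpa only [Set.insert_eq_of_mem hΓ, Set.insert_eq_of_mem hΔ] using
    Deriv.step (Step.ax (cut := cut) (Γ := Γ) (Δ := Δ) hφ) (by simp)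

lemma bot_of_mem {i : N} (h : .at i .bot ∈ Γ) : Deriv cut (Γ, Δ) := by
  simpa only [Set.insert_eq_of_mem h] using
    Deriv.step (Step.bot (cut := cut) (Γ := Γ) (Δ := Δ) i) (by simp)

lemma weakenL {φ : Node P N M C} (hφ : φ.Admissible) (d : Deriv cut (Γ, Δ)) :
    Deriv cut (insert φ Γ, Δ) :=
  of_step₁ (.wl φ hφ) d

lemma weakenR {φ : Node P N M C} (hφ : φ.Admissible) (d : Deriv cut (Γ, Δ)) :
    Deriv cut (Γ, insert φ Δ) :=
  of_step₁ (.wr φ hφ) d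

lemma implL_of_mem {i : N} {φ ψ : Node P N M C} (h : .at i (.impl φ ψ) ∈ Γ)
    (d₁ : Deriv cut (Γ, insert (.at i φ) Δ)) (d₂ : Deriv cut (insert (.at i ψ) Γ, Δ)) :
    Deriv cut (Γ, Δ) := by
  simpa only [Set.insert_eq_of_mem h] using of_step₂ (.implL (Γ := Γ) i φ ψ) d₁ d₂

lemma implR_of_mem {i : N} {φ ψ : Node P N M C} (h : .at i (.impl φ ψ) ∈ Δ)
    (d : Deriv cut (insert (.at i φ) Γ, insert (.at i ψ) Δ)) : Deriv cut (Γ, Δ) := by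
  simpa only [Set.insert_eq_of_mem h] using of_step₁ (.implR (Δ := Δ) i φ ψ) d

lemma andL_of_mem {i : N} {φ ψ : Node P N M C} (h : .at i (φ.and ψ) ∈ Γ)
    (d : Deriv cut (insert (.at i φ) (insert (.at i ψ) Γ), Δ)) : Deriv cut (Γ, Δ) := by
  refine implL_of_mem h ?_ (bot_of_mem (Set.mem_insert _ _))
  refine implR_of_mem (Set.mem_insert _ _) (implR_of_mem (Set.mem_insert _ _) ?_)
  rw [Set.insert_comm]
  exact weakenR trivial (weakenR trivial (weakenR trivial d))

lemma cmpL_of_mem [Infinite N] {i : N} {α β : Path P N M C} {b : Comparison C}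
    (hΓ : Γ.Finite) (hΔ : Δ.Finite) (h : .at i (b.node α β) ∈ Γ)
    (d : ∀ j k, Deriv cut (insert (.at i (α.dia (.nom j)))
      (insert (.at i (β.dia (.nom k))) (insert (b.node (.nom j) (.nom k)) Γ)), Δ)) :
    Deriv cut (Γ, Δ) := by
  obtain ⟨j, -, hj⟩ := exists_freshIn (hΓ.union hΔ) Set.finite_empty
  obtain ⟨k, hkj, hk⟩ := exists_freshIn (hΓ.union hΔ) (Set.finite_singleton j)
  rw [freshIn_union] at hj hk
  rw [← Set.insert_eq_of_mem h] at hj hk ⊢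
  exact of_step₁ (.cmpL i j k α β b (Ne.symm hkj) hj.1 hj.2 hk.1 hk.2)
    (by simpa only [Set.insert_eq_of_mem h] using d j k)

lemma cmpR_of_mem {i j k : N} {α β : Path P N M C} {b : Comparison C}
    (hα : .at i (α.dia (.nom j)) ∈ Γ) (hβ : .at i (β.dia (.nom k)) ∈ Γ)
    (h : .at i (b.node α β) ∈ Δ) (d : Deriv cut (Γ, insert (b.node (.nom j) (.nom k)) Δ)) :
    Deriv cut (Γ, Δ) := by
  have := of_step₁ (.cmpR (Γ := Γ) (Δ := Δ) i j k α β b)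
    (by rwa [Set.insert_eq_of_mem hβ, Set.insert_eq_of_mem hα, Set.insert_comm,
      Set.insert_eq_of_mem h])
  rwa [Set.insert_eq_of_mem hβ, Set.insert_eq_of_mem hα, Set.insert_eq_of_mem h] at this

lemma eq5_of_mem {x y z : N} {c : C} (hxy : .eq (.nom x) c (.nom y) ∈ Γ)
    (hxz : .eq (.nom x) c (.nom z) ∈ Γ)
    (d : Deriv cut (insert (.eq (.nom y) c (.nom z)) Γ, Δ)) : Deriv cut (Γ, Δ) := by
  have := of_step₁ (.eq5 (Γ := Γ) (Δ := Δ) x y z c)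
    (by rwa [Set.insert_eq_of_mem hxz, Set.insert_eq_of_mem hxy])
  rwa [Set.insert_eq_of_mem hxz, Set.insert_eq_of_mem hxy] at this

lemma s3_of_mem {x y z : N} {c : C} (hxy : .at x (.nom y) ∈ Γ)
    (hxz : .eq (.nom x) c (.nom z) ∈ Γ)
    (d : Deriv cut (insert (.eq (.nom y) c (.nom z)) Γ, Δ)) : Deriv cut (Γ, Δ) := by
  have := of_step₁ (.s3 (Γ := Γ) (Δ := Δ) x y z c)
    (by rwa [Set.insert_eq_of_mem hxz, Set.insert_eq_of_mem hxy])
  rwa [Set.insert_eq_of_mem hxz, Set.insert_eq_of_mem hxy] at this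

lemma eq_symm_of_mem {x y : N} {c : C} (h : .eq (.nom x) c (.nom y) ∈ Γ)
    (d : Deriv cut (insert (.eq (.nom y) c (.nom x)) Γ, Δ)) : Deriv cut (Γ, Δ) := by
  refine of_step₁ (.eqT x c) (eq5_of_mem (Set.mem_insert_of_mem _ h) (Set.mem_insert _ _) ?_)
  rw [Set.insert_comm]
  exact weakenL trivial d

lemma eq_trans_of_mem {x y z : N} {c : C} (hxy : .eq (.nom x) c (.nom y) ∈ Γ)
    (hyz : .eq (.nom y) c (.nom z) ∈ Γ)
    (d : Deriv cut (insert (.eq (.nom x) c (.nom z)) Γ, Δ)) : Deriv cut (Γ, Δ) := by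
  refine eq_symm_of_mem hxy (eq5_of_mem (Set.mem_insert _ _) (Set.mem_insert_of_mem _ hyz) ?_)
  rw [Set.insert_comm]
  exact weakenL trivial d

lemma eq_of_at_of_mem {x y : N} {c : C} (h : .at x (.nom y) ∈ Γ)
    (d : Deriv cut (insert (.eq (.nom y) c (.nom x)) Γ, Δ)) : Deriv cut (Γ, Δ) := by
  refine of_step₁ (.eqT x c) (s3_of_mem (Set.mem_insert_of_mem _ h) (Set.mem_insert _ _) ?_)
  rw [Set.insert_comm]
  exact weakenL trivial d

end Deriv

/-- transitivity of data equality in G: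
    ⊢ @_i(⟨α =_c ε⟩ ∧ ⟨ε =_c β⟩ → ⟨α =_c β⟩). -/
theorem eq_trans_provable {P N M C : Type} [Countable P] [Infinite P] [Countable N] [Infinite N] [Finite M] [Finite C]
    (i : N) (α β : Path P N M C) (c : C) :
    ProvableG (∅ : Set (Node P N M C))
      {Node.at i (.impl
          (Node.and (.eq α c Path.eps) (.eq Path.eps c β))
          (.eq α c β))} := by
  refine Deriv.implR_of_mem (Set.mem_singleton _) (Deriv.andL_of_mem (Set.mem_insert _ _) ?_)
  refine Deriv.cmpL_of_mem (b := .ceq c) (Set.toFinite _) (Set.toFinite _) (Set.mem_insert _ _)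
    fun j k => ?_
  refine Deriv.cmpL_of_mem (i := i) (α := .eps) (β := β) (b := .ceq c)
    (Set.toFinite _) (Set.toFinite _) (by simp) fun j' k' => ?_
  refine Deriv.andL_of_mem (i := i) (φ := .top) (ψ := .nom k) (by simp) ?_
  refine Deriv.andL_of_mem (i := i) (φ := .top) (ψ := .nom j') (by simp) ?_
  refine Deriv.cmpR_of_mem (i := i) (α := α) (β := β) (b := .ceq c) (j := j) (k := k')
    (by simp) (by simp) (by simp) ?_
  refine Deriv.eq_of_at_of_mem (x := i) (y := k) (c := c) (by simp) ?_
  refine Deriv.eq_of_at_of_mem (x := i) (y := j') (c := c) (by simp) ?_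
  refine Deriv.eq_symm_of_mem (x := j') (y := i) (c := c) (by simp) ?_
  refine Deriv.eq_trans_of_mem (x := j) (y := k) (z := i) (c := c) (by simp) (by simp) ?_
  refine Deriv.eq_trans_of_mem (x := j) (y := i) (z := j') (c := c) (by simp) (by simp) ?_
  refine Deriv.eq_trans_of_mem (x := j) (y := j') (z := k') (c := c) (by simp) (by simp) ?_
  exact Deriv.ax_of_mem (.eq j c k') (by simp) (by simp)

end HXPathD
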